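/- For all real numbers a ≠ 0 and c ≠ 0, on the open set U = {(x,y) ∈ ℝ² : x > 0 and y < 0}, the functions f(x,y) = (a/√x)·e^{c·arctan(√(−y/x))} and k(x,y) = (a/√(−y))·e^{c·arctan(√(−y/x))} satisfy all three equations (E1), (E2), (E3) of the system (S_ε) with ε = 0, and the same holds with k replaced by −k. -/

import Mathlib

/-!
On `x > 0 > y` one has `f / k = √(-y) / √x`, and (E1) is a direct computation. With
`θ = arctan √(-y/x)`, the factor `e^{cθ}` is common to `f` and `k`, and both `(∂_y f)/k` and
`(∂ₓ k)/f` come out as `-c / (2 (x - y))`: this is (E2), and since the common value depends on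
`x - y` only, `∂_y + ∂ₓ` kills it, which is (E3) with `ε = 0`. Replacing `k` by `-k` flips the
sign of both sides of each equation.
-/

noncomputable section

/-- Partial derivative with respect to the first coordinate. -/
def pdx (f : ℝ × ℝ → ℝ) (p : ℝ × ℝ) : ℝ := deriv (fun t => f (t, p.2)) p.1

/-- Partial derivative with respect to the second coordinate. -/
def pdy (f : ℝ × ℝ → ℝ) (p : ℝ × ℝ) : ℝ := deriv (fun t => f (p.1, t)) p.2

/-- Equation (E1):  ∂ₓ(k/f) + ∂_y(f/k) = 0  at the point `p`. -/
def E1 (f k : ℝ × ℝ → ℝ) (p : ℝ × ℝ) : Prop :=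
  pdx (fun q => k q / f q) p + pdy (fun q => f q / k q) p = 0

/-- Equation (E2):  (∂_y f)/k = (∂ₓ k)/f  at the point `p`. -/
def E2 (f k : ℝ × ℝ → ℝ) (p : ℝ × ℝ) : Prop :=
  pdy f p / k p = pdx k p / f p

/-- Equation (E3):  ∂_y((∂_y f)/k) + ∂ₓ((∂ₓ k)/f) = −ε·f·k  at the point `p`. -/
def E3 (ε : ℝ) (f k : ℝ × ℝ → ℝ) (p : ℝ × ℝ) : Prop :=
  pdy (fun q => pdy f q / k q) p + pdx (fun q => pdx k q / f q) p = -ε * f p * k p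

open Real Topology

lemma pdx_neg (g : ℝ × ℝ → ℝ) (p : ℝ × ℝ) : pdx (fun q => -g q) p = -pdx g p := deriv.neg

lemma pdy_neg (g : ℝ × ℝ → ℝ) (p : ℝ × ℝ) : pdy (fun q => -g q) p = -pdy g p := deriv.neg

lemma pdx_congr {F G : ℝ × ℝ → ℝ} {p : ℝ × ℝ} (h : F =ᶠ[𝓝 p] G) : pdx F p = pdx G p :=
  (h.comp_tendsto ((continuous_id.prodMk continuous_const).tendsto' p.1 p rfl)).deriv_eq

lemma pdy_congr {F G : ℝ × ℝ → ℝ} {p : ℝ × ℝ} (h : F =ᶠ[𝓝 p] G) : pdy F p = pdy G p :=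
  (h.comp_tendsto ((continuous_const.prodMk continuous_id).tendsto' p.2 p rfl)).deriv_eq

lemma pdx_add_pdy_comp_sub (g : ℝ → ℝ) (p : ℝ × ℝ) :
    pdx (fun q => g (q.1 - q.2)) p + pdy (fun q => g (q.1 - q.2)) p = 0 := by
  rw [pdx, pdy, deriv_comp_sub_const, deriv_comp_const_sub, add_neg_cancel]

lemma E1_neg_right_iff {f k : ℝ × ℝ → ℝ} {p : ℝ × ℝ} : E1 f (fun q => -k q) p ↔ E1 f k p := by
  simp only [E1, neg_div, div_neg, pdx_neg, pdy_neg, ← neg_add, neg_eq_zero]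

lemma E2_neg_right_iff {f k : ℝ × ℝ → ℝ} {p : ℝ × ℝ} : E2 f (fun q => -k q) p ↔ E2 f k p := by
  simp only [E2, neg_div, div_neg, pdx_neg, neg_inj]

lemma E3_neg_right_iff {ε : ℝ} {f k : ℝ × ℝ → ℝ} {p : ℝ × ℝ} :
    E3 ε f (fun q => -k q) p ↔ E3 ε f k p := by
  simp only [E3, neg_div, div_neg, pdx_neg, pdy_neg, mul_neg, ← neg_add, neg_inj]

lemma E2_and_E3_zero_of_ratios_eq_comp_sub {f k : ℝ × ℝ → ℝ} {g : ℝ → ℝ} {p : ℝ × ℝ}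
    (hf : (fun q => pdy f q / k q) =ᶠ[𝓝 p] fun q => g (q.1 - q.2))
    (hk : (fun q => pdx k q / f q) =ᶠ[𝓝 p] fun q => g (q.1 - q.2)) :
    E2 f k p ∧ E3 0 f k p := by
  refine ⟨hf.eq_of_nhds.trans hk.eq_of_nhds.symm, ?_⟩
  rw [E3, pdy_congr hf, pdx_congr hk, add_comm, pdx_add_pdy_comp_sub, neg_zero, zero_mul,
    zero_mul]

lemma eventually_fst_pos_snd_neg {p : ℝ × ℝ} (hx : 0 < p.1) (hy : p.2 < 0) :
    ∀ᶠ q in 𝓝 p, 0 < q.1 ∧ q.2 < 0 :=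
  (continuousAt_const.eventually_lt continuousAt_fst hx).and
    (continuousAt_snd.eventually_lt continuousAt_const hy)

lemma hasDerivAt_arctan_sqrt_neg_div_const {x y : ℝ} (hx : 0 < x) (hy : y < 0) :
    HasDerivAt (fun t => arctan √(-t / x)) (-1 / (2 * √(-y / x) * (x - y))) y := by
  have hyx : 0 < -y / x := div_pos (neg_pos.2 hy) hx
  have hs : 0 < √(-y / x) := sqrt_pos.2 hyx
  refine ((hasDerivAt_id' y).neg.div_const x |>.sqrt hyx.ne').arctan.congr_deriv ?_
  simp only [Pi.neg_apply, sq_sqrt hyx.le]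
  field_simp
  ring

lemma hasDerivAt_arctan_sqrt_const_div {x y : ℝ} (hx : 0 < x) (hy : y < 0) :
    HasDerivAt (fun t => arctan √(-y / t)) (-√(-y / x) / (2 * (x - y))) x := by
  have hyx : 0 < -y / x := div_pos (neg_pos.2 hy) hx
  have hs : 0 < √(-y / x) := sqrt_pos.2 hyx
  have hs2 := sq_sqrt hyx.le
  refine ((hasDerivAt_const x (-y)).div (hasDerivAt_id' x) hx.ne' |>.sqrt hyx.ne').arctan
    |>.congr_deriv ?_
  simp only [Pi.div_apply, hs2]
  generalize √(-y / x) = s at hs hs2 ⊢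
  have hxy : x - y ≠ 0 := by linarith
  field_simp at hs2 ⊢
  rw [← sub_eq_add_neg, hs2]
  field_simp
  ring

lemma HasDerivAt.const_mul_exp_const_mul {φ : ℝ → ℝ} {φ' x : ℝ} (A c : ℝ)
    (h : HasDerivAt φ φ' x) :
    HasDerivAt (fun t => A * Real.exp (c * φ t)) (c * φ' * (A * Real.exp (c * φ x))) x :=
  ((h.const_mul c).exp.const_mul A).congr_deriv (by ring)

/-- The non-exponential family (8.3) of the paper. -/
def family83F (a c : ℝ) (p : ℝ × ℝ) : ℝ := a / √p.1 * exp (c * arctan √(-p.2 / p.1))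

def family83K (a c : ℝ) (p : ℝ × ℝ) : ℝ := a / √(-p.2) * exp (c * arctan √(-p.2 / p.1))

section Family83

variable {a c : ℝ} {p : ℝ × ℝ}

lemma family83F_div_family83K (ha : a ≠ 0) (hx : 0 < p.1) (hy : p.2 < 0) :
    family83F a c p / family83K a c p = √(-p.2) / √p.1 := by
  have : 0 < √(-p.2) := sqrt_pos.2 (neg_pos.2 hy)
  have : 0 < √p.1 := sqrt_pos.2 hx
  simp only [family83F, family83K]
  field_simp

lemma family83K_div_family83F (ha : a ≠ 0) (hx : 0 < p.1) (hy : p.2 < 0) :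
    family83K a c p / family83F a c p = √p.1 / √(-p.2) := by
  rw [← inv_div, family83F_div_family83K ha hx hy, inv_div]

lemma E1_family83 (ha : a ≠ 0) (hx : 0 < p.1) (hy : p.2 < 0) :
    E1 (family83F a c) (family83K a c) p := by
  have hev := eventually_fst_pos_snd_neg hx hy
  rw [E1, pdx_congr (hev.mono fun q hq => family83K_div_family83F ha hq.1 hq.2),
    pdy_congr (hev.mono fun q hq => family83F_div_family83K ha hq.1 hq.2), pdx, pdy]
  dsimp only
  rw [((hasDerivAt_sqrt hx.ne').div_const _).deriv,
    (((hasDerivAt_neg' _).sqrt (neg_ne_zero.2 hy.ne)).div_const _).deriv]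
  field_simp
  ring

lemma pdy_family83F_div_family83K (ha : a ≠ 0) (hx : 0 < p.1) (hy : p.2 < 0) :
    pdy (family83F a c) p / family83K a c p = -c / (2 * (p.1 - p.2)) := by
  have h : HasDerivAt (fun t => family83F a c (p.1, t))
      (c * (-1 / (2 * √(-p.2 / p.1) * (p.1 - p.2))) * family83F a c p) p.2 :=
    (hasDerivAt_arctan_sqrt_neg_div_const hx hy).const_mul_exp_const_mul (a / √p.1) c
  have : 0 < √(-p.2) := sqrt_pos.2 (neg_pos.2 hy)
  have : 0 < √p.1 := sqrt_pos.2 hx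
  have : p.1 - p.2 ≠ 0 := by linarith
  rw [pdy, h.deriv, mul_div_assoc, family83F_div_family83K ha hx hy, sqrt_div (neg_pos.2 hy).le]
  field_simp

lemma pdx_family83K_div_family83F (ha : a ≠ 0) (hx : 0 < p.1) (hy : p.2 < 0) :
    pdx (family83K a c) p / family83F a c p = -c / (2 * (p.1 - p.2)) := by
  have h : HasDerivAt (fun t => family83K a c (t, p.2))
      (c * (-√(-p.2 / p.1) / (2 * (p.1 - p.2))) * family83K a c p) p.1 :=
    (hasDerivAt_arctan_sqrt_const_div hx hy).const_mul_exp_const_mul (a / √(-p.2)) c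
  have : 0 < √(-p.2) := sqrt_pos.2 (neg_pos.2 hy)
  have : 0 < √p.1 := sqrt_pos.2 hx
  have : p.1 - p.2 ≠ 0 := by linarith
  rw [pdx, h.deriv, mul_div_assoc, family83K_div_family83F ha hx hy, sqrt_div (neg_pos.2 hy).le]
  field_simp

end Family83

theorem stmt_11_general (a c : ℝ) (ha : a ≠ 0) :
    let f : ℝ × ℝ → ℝ :=
      fun p => (a / Real.sqrt p.1) * Real.exp (c * Real.arctan (Real.sqrt (-p.2 / p.1)))
    let k : ℝ × ℝ → ℝ :=
      fun p => (a / Real.sqrt (-p.2)) * Real.exp (c * Real.arctan (Real.sqrt (-p.2 / p.1)))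
    ∀ p : ℝ × ℝ, 0 < p.1 → p.2 < 0 →
      (E1 f k p ∧ E2 f k p ∧ E3 0 f k p) ∧
        (E1 f (fun q => -k q) p ∧ E2 f (fun q => -k q) p ∧ E3 0 f (fun q => -k q) p) := by
  intro f k p hx hy
  have hev := eventually_fst_pos_snd_neg hx hy
  have hE1 : E1 f k p := E1_family83 ha hx hy
  have hE23 : E2 f k p ∧ E3 0 f k p :=
    E2_and_E3_zero_of_ratios_eq_comp_sub (g := fun s => -c / (2 * s))
      (hev.mono fun q hq => pdy_family83F_div_family83K ha hq.1 hq.2)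
      (hev.mono fun q hq => pdx_family83K_div_family83F ha hq.1 hq.2)
  exact ⟨⟨hE1, hE23⟩, E1_neg_right_iff.2 hE1, E2_neg_right_iff.2 hE23.1,
    E3_neg_right_iff.2 hE23.2⟩

/-- For `a ≠ 0`, `c ≠ 0`, on the open set where `x > 0` and `y < 0`, the
functions `f = (a/√x)·e^{c·arctan√(−y/x)}` and `k = (a/√(−y))·e^{c·arctan√(−y/x)}`
satisfy (E1), (E2), (E3) with ε = 0, and likewise with `k` replaced by `−k`. -/
theorem stmt_11 (a c : ℝ) (ha : a ≠ 0) (hc : c ≠ 0) :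
    let f : ℝ × ℝ → ℝ :=
      fun p => (a / Real.sqrt p.1) * Real.exp (c * Real.arctan (Real.sqrt (-p.2 / p.1)))
    let k : ℝ × ℝ → ℝ :=
      fun p => (a / Real.sqrt (-p.2)) * Real.exp (c * Real.arctan (Real.sqrt (-p.2 / p.1)))
    ∀ p : ℝ × ℝ, 0 < p.1 → p.2 < 0 →
      (E1 f k p ∧ E2 f k p ∧ E3 0 f k p) ∧
        (E1 f (fun q => -k q) p ∧ E2 f (fun q => -k q) p ∧ E3 0 f (fun q => -k q) p) :=
  stmt_11_general a c ha
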